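/- arXiv:2004.13803 — 2 statements merged into one kernel-verified Lean document; each statement's English description precedes it below -/
import Mathlib

section
/- Let K = ℂ((t)), O = ℂ[[t]], and let L, L' be O-lattices in K³ with d([L],[L']) = kω₁ for some k ≥ 0 (or kω₂). Then minconv([L],[L']) = maxconv([L],[L']), and this common set has exactly k+1 elements, forming the straight-path geodesic from [L] to [L']. -/
set_option maxHeartbeats 1000000
set_option synthInstance.maxHeartbeats 1000000

open Pointwise

noncomputable section

/-- `K = ℂ((t))`, the field of formal Laurent series over `ℂ`. -/
abbrev K := LaurentSeries ℂ

/-- `O = ℂ[[t]]`, the ring of formal power series, the valuation ring of `K`. -/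
abbrev O := PowerSeries ℂ

/-- `K^n`. -/
abbrev V (n : ℕ) := Fin n → K

/-- An `O`-lattice in `K^n`: a finitely generated `O`-submodule whose `K`-span is all of
`K^n`. -/
def IsLattice {n : ℕ} (L : Submodule O (V n)) : Prop :=
  L.FG ∧ Submodule.span K (L : Set (V n)) = ⊤

instance : SMulCommClass K O K :=
  ⟨fun a b c => by simp only [Algebra.smul_def, smul_eq_mul]; ring⟩

/-- The uniformizer `t` of `O`, viewed as an element of `K`. -/
def tK : K := algebraMap O K PowerSeries.X

lemma tK_ne_zero : tK ≠ 0 :=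
  (map_ne_zero_iff _ (IsFractionRing.injective O K)).2 PowerSeries.X_ne_zero

/-- Two `O`-submodules of `K^n` are homothetic if they differ by an integer power of `t`. -/
def Homothetic {n : ℕ} (L L' : Submodule O (V n)) : Prop :=
  ∃ k : ℤ, L' = (tK ^ k) • L

instance homSetoid (n : ℕ) : Setoid (Submodule O (V n)) where
  r := Homothetic
  iseqv := by
    constructor
    · intro L; exact ⟨0, by simp⟩
    · rintro L L' ⟨k, rfl⟩
      exact ⟨-k, by rw [smul_smul, ← zpow_add₀ tK_ne_zero]; simp⟩
    · rintro L L' L'' ⟨k, rfl⟩ ⟨l, rfl⟩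
      exact ⟨l + k, by rw [smul_smul, ← zpow_add₀ tK_ne_zero]⟩

/-- Homothety classes of `O`-submodules of `K^n`. -/
def LatClass (n : ℕ) := Quotient (homSetoid n)

/-! In the basis `v` both `L = span_O v` and `L'` are diagonal, with exponent vectors `0` and
`(-k, 0, 0)`. Intersections and sums of diagonal lattices are diagonal, with the coordinatewise
maximum and minimum as exponents, and diagonal lattices are homothetic exactly when their
exponent vectors differ by a constant. Hence every `[L ∩ t^c L']` and every `[L + t^c L']` is the
class of a diagonal lattice with exponents `(a, b, b)`, i.e. of `span_O(t^{a-b} v₁, v₂, v₃)`, and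
as `c` runs over `ℤ` the difference `b - a` runs over exactly `{0, …, k}`, each value giving a
different class. -/

lemma tK_zpow_mem_bot_iff {m : ℤ} : tK ^ m ∈ (⊥ : Subalgebra O K) ↔ 0 ≤ m := by
  rw [Algebra.mem_bot]
  refine ⟨fun ⟨f, hf⟩ => ?_, fun hm => ?_⟩
  · by_contra! hm
    -- `t ^ m` with `m < 0` would make `X ^ (-m)` a unit of `O`.
    have hunit : f * PowerSeries.X ^ (-m).toNat = 1 := by
      apply IsFractionRing.injective O K
      rw [map_mul, map_pow, hf, map_one, ← tK, ← zpow_natCast, ← zpow_add₀ tK_ne_zero,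
        Int.toNat_of_nonneg (by omega), add_neg_cancel, zpow_zero]
    have hX : IsUnit (PowerSeries.X : O) :=
      (isUnit_pow_iff (by omega : (-m).toNat ≠ 0)).1 (.of_mul_eq_one_right f hunit)
    simpa using PowerSeries.isUnit_constantCoeff _ hX
  · lift m to ℕ using hm
    exact ⟨PowerSeries.X ^ m, by rw [map_pow, zpow_natCast]; rfl⟩

lemma zpow_mul_mem_bot_of_le {m n : ℤ} (h : m ≤ n) {x : K}
    (hx : tK ^ m * x ∈ (⊥ : Subalgebra O K)) : tK ^ n * x ∈ (⊥ : Subalgebra O K) := by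
  have : tK ^ n * x = tK ^ (n - m) * (tK ^ m * x) := by
    rw [← mul_assoc, ← zpow_add₀ tK_ne_zero, sub_add_cancel]
  exact this ▸ mul_mem (tK_zpow_mem_bot_iff.2 (by omega)) hx

section diagLattice

variable {ι M : Type*} [AddCommGroup M] [Module K M] [Module O M] (v : Module.Basis ι K M)

/-- The lattice with elementary divisors `t ^ a i` relative to `span_O v`. -/
def diagLattice (a : ι → ℤ) : Submodule O M :=
  Submodule.span O (Set.range fun i => tK ^ a i • v i)

lemma zpow_smul_diagLattice [SMulCommClass K O M] (m : ℤ) (a : ι → ℤ) :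
    tK ^ m • diagLattice v a = diagLattice v (fun i => m + a i) := by
  simp only [diagLattice, Submodule.smul_span, Set.smul_set_range, smul_smul,
    ← zpow_add₀ tK_ne_zero]

lemma diagLattice_zero : diagLattice v 0 = Submodule.span O (Set.range v) := by
  simp [diagLattice]

variable [IsScalarTower O K M]

lemma mem_diagLattice_iff (a : ι → ℤ) (x : M) :
    x ∈ diagLattice v a ↔ ∀ i, tK ^ (-a i) * v.repr x i ∈ (⊥ : Subalgebra O K) := by
  let u : ι → Kˣ := fun i => Units.mk0 (tK ^ a i) (zpow_ne_zero _ tK_ne_zero)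
  have hu : ⇑(v.unitsSMul u) = fun i => tK ^ a i • v i :=
    funext fun i => Module.Basis.unitsSMul_apply i
  rw [diagLattice, ← hu, Module.Basis.mem_span_iff_repr_mem]
  refine forall_congr' fun i => ?_
  rw [Module.Basis.repr_unitsSMul, Algebra.mem_bot, Units.smul_def, smul_eq_mul, zpow_neg,
    Units.val_inv_eq_inv_val]
  rfl

lemma diagLattice_le_diagLattice_iff {a b : ι → ℤ} :
    diagLattice v a ≤ diagLattice v b ↔ b ≤ a := by
  refine ⟨fun hle i => ?_, fun hba x hx => ?_⟩
  · have hmem := (mem_diagLattice_iff v b _).1 (hle (Submodule.subset_span ⟨i, rfl⟩)) i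
    rw [map_smul, Finsupp.smul_apply, Module.Basis.repr_self, Finsupp.single_eq_same, smul_eq_mul,
      mul_one, ← zpow_add₀ tK_ne_zero, tK_zpow_mem_bot_iff] at hmem
    linarith
  · rw [mem_diagLattice_iff] at hx ⊢
    exact fun i => zpow_mul_mem_bot_of_le (neg_le_neg (hba i)) (hx i)

lemma diagLattice_injective : Function.Injective (diagLattice v) := fun _ _ h =>
  le_antisymm ((diagLattice_le_diagLattice_iff v).1 h.ge)
    ((diagLattice_le_diagLattice_iff v).1 h.le)

lemma diagLattice_inf (a b : ι → ℤ) :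
    diagLattice v a ⊓ diagLattice v b = diagLattice v (a ⊔ b) := by
  ext x
  simp only [Submodule.mem_inf, mem_diagLattice_iff, ← forall_and]
  refine forall_congr' fun i => ⟨fun ⟨ha, hb⟩ => ?_, fun h => ?_⟩
  · rcases le_total (a i) (b i) with hab | hab
    · simpa [hab] using hb
    · simpa [hab] using ha
  · exact ⟨zpow_mul_mem_bot_of_le (by simp) h, zpow_mul_mem_bot_of_le (by simp) h⟩

lemma diagLattice_sup (a b : ι → ℤ) :
    diagLattice v a ⊔ diagLattice v b = diagLattice v (a ⊓ b) := by
  refine le_antisymm (sup_le ?_ ?_) (Submodule.span_le.2 ?_)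
  · exact (diagLattice_le_diagLattice_iff v).2 inf_le_left
  · exact (diagLattice_le_diagLattice_iff v).2 inf_le_right
  rintro _ ⟨i, rfl⟩
  rcases le_total (a i) (b i) with hab | hab
  · have hi : tK ^ a i • v i ∈ diagLattice v a := Submodule.subset_span ⟨i, rfl⟩
    simpa [hab] using Submodule.mem_sup_left hi
  · have hi : tK ^ b i • v i ∈ diagLattice v b := Submodule.subset_span ⟨i, rfl⟩
    simpa [hab] using Submodule.mem_sup_right hi

end diagLattice

lemma mk_diagLattice_eq_mk_diagLattice_iff {ι : Type*} {n : ℕ} (v : Module.Basis ι K (V n))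
    (a b : ι → ℤ) :
    (⟦diagLattice v a⟧ : LatClass n) = ⟦diagLattice v b⟧ ↔ ∃ m : ℤ, b = fun i => m + a i := by
  refine Quotient.eq.trans ⟨fun ⟨m, hm⟩ => ⟨m, ?_⟩, fun ⟨m, hm⟩ => ⟨m, ?_⟩⟩
  · exact diagLattice_injective v (hm.trans (zpow_smul_diagLattice v m a))
  · rw [zpow_smul_diagLattice, hm]

lemma range_toNat_min (k : ℕ) : Set.range (fun c : ℤ => (min c k).toNat) = Set.Iic k := by
  ext n
  simp only [Set.mem_range, Set.mem_Iic]
  exact ⟨by rintro ⟨c, rfl⟩; omega, fun hn => ⟨n, by omega⟩⟩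

section straightPath

variable (v : Module.Basis (Fin 3) K (V 3))

def straightVertex (c : ℕ) : LatClass 3 := ⟦diagLattice v ![-(c : ℤ), 0, 0]⟧

lemma straightVertex_injective : Function.Injective (straightVertex v) := fun c c' h => by
  obtain ⟨m, hm⟩ := (mk_diagLattice_eq_mk_diagLattice_iff v _ _).1 h
  have h0 := congrFun hm 0
  have h1 := congrFun hm 1
  simp only [Matrix.cons_val_zero, Matrix.cons_val_one] at h0 h1
  omega

lemma mk_diagLattice_eq_straightVertex {a : Fin 3 → ℤ} {c : ℕ} (h12 : a 1 = a 2)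
    (h01 : a 1 - a 0 = c) : ⟦diagLattice v a⟧ = straightVertex v c :=
  (mk_diagLattice_eq_mk_diagLattice_iff v _ _).2 ⟨-a 1, funext fun i => by
    fin_cases i <;> simp <;> omega⟩

lemma span_range_eq_diagLattice (m : ℤ) :
    Submodule.span O (Set.range ![tK ^ m • v 0, v 1, v 2]) = diagLattice v ![m, 0, 0] := by
  rw [diagLattice]
  congr
  funext i
  fin_cases i <;> simp

lemma mk_inf_zpow_smul_diagLattice (k : ℕ) (c : ℤ) :
    ⟦diagLattice v 0 ⊓ tK ^ c • diagLattice v ![-(k : ℤ), 0, 0]⟧ =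
      straightVertex v (min c k).toNat := by
  rw [zpow_smul_diagLattice, diagLattice_inf]
  apply mk_diagLattice_eq_straightVertex
  · simp
  · simp; omega

lemma mk_sup_zpow_smul_diagLattice (k : ℕ) (c : ℤ) :
    ⟦diagLattice v 0 ⊔ tK ^ c • diagLattice v ![-(k : ℤ), 0, 0]⟧ =
      straightVertex v (min (k - c) k).toNat := by
  rw [zpow_smul_diagLattice, diagLattice_sup]
  apply mk_diagLattice_eq_straightVertex
  · simp
  · simp; omega

end straightPath

/-- If `d([L],[L']) = k·ω₁` (witnessed by a `K`-basis `v` of `K³` with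
`L = span_O(v₁,v₂,v₃)` and `L' = span_O(t^{-k}v₁, v₂, v₃)`), then
`minconv([L],[L']) = maxconv([L],[L'])`, and this common set is the straight-path
geodesic `{[span_O(t^{-c}v₁, v₂, v₃)] : 0 ≤ c ≤ k}` from `[L]` to `[L']`, which has
exactly `k + 1` elements. -/
theorem minconv_eq_maxconv_straight (k : ℕ) (v : Module.Basis (Fin 3) K (V 3)) :
    let L : Submodule O (V 3) := Submodule.span O (Set.range fun i => (v i : V 3))
    let L' : Submodule O (V 3) := Submodule.span O
      (Set.range ![(tK ^ (-(k : ℤ))) • v 0, (v 1 : V 3), v 2])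
    {C : LatClass 3 | ∃ c : ℤ, C = ⟦L ⊓ (tK ^ c) • L'⟧} =
      {C : LatClass 3 | ∃ c : ℤ, C = ⟦L ⊔ (tK ^ c) • L'⟧} ∧
    {C : LatClass 3 | ∃ c : ℤ, C = ⟦L ⊓ (tK ^ c) • L'⟧} =
      {C : LatClass 3 | ∃ c : ℕ, c ≤ k ∧ C = ⟦Submodule.span O
        (Set.range ![(tK ^ (-(c : ℤ))) • v 0, (v 1 : V 3), v 2])⟧} ∧
    {C : LatClass 3 | ∃ c : ℤ, C = ⟦L ⊓ (tK ^ c) • L'⟧}.ncard = k + 1 := by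
  intro L L'
  have hL : L = diagLattice v 0 := (diagLattice_zero v).symm
  have hL' : L' = diagLattice v ![-(k : ℤ), 0, 0] := span_range_eq_diagLattice v _
  have hmin : {C : LatClass 3 | ∃ c : ℤ, C = ⟦L ⊓ (tK ^ c) • L'⟧} =
      straightVertex v '' Set.Iic k := by
    simp_rw [hL, hL', mk_inf_zpow_smul_diagLattice, ← range_toNat_min k, ← Set.range_comp]
    exact Set.ext fun C => exists_congr fun c => eq_comm
  have hmax : {C : LatClass 3 | ∃ c : ℤ, C = ⟦L ⊔ (tK ^ c) • L'⟧} =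
      straightVertex v '' Set.Iic k := by
    simp_rw [hL, hL', mk_sup_zpow_smul_diagLattice]
    rw [← range_toNat_min k, ← Set.range_comp, ← (Equiv.subLeft (k : ℤ)).surjective.range_comp]
    exact Set.ext fun C => exists_congr fun c => eq_comm
  have hpath : {C : LatClass 3 | ∃ c : ℕ, c ≤ k ∧ C = ⟦Submodule.span O
      (Set.range ![(tK ^ (-(c : ℤ))) • v 0, (v 1 : V 3), v 2])⟧} =
      straightVertex v '' Set.Iic k := by
    simp_rw [span_range_eq_diagLattice]
    exact Set.ext fun C => exists_congr fun c => and_congr_right fun _ => eq_comm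
  refine ⟨hmin.trans hmax.symm, hmin.trans hpath.symm, ?_⟩
  rw [hmin, Set.ncard_image_of_injective _ (straightVertex_injective v), Set.ncard_Iic_nat]
end
end

section
/- In a cylindrical growth diagram for SL₃ of type λ⃗ with γ_{1,2} = ω₁, γ_{2,3} = ω₂, and γ_{1,3} = ω₃ = (1,1,1) (a 'U-turn'), one has γ_{1,j} = γ_{3,j} + (1,1,1) as partitions for all 3 ≤ j ≤ n+1, and the set dif(γ_{1,j}, γ_{2,j}) equals {3} for every j ≥ 3. -/
noncomputable section

/-- Sort a triple of integers into weakly decreasing order. -/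
def sort3 (x : Fin 3 → ℤ) : Fin 3 → ℤ :=
  ![max (max (x 0) (x 1)) (x 2),
    x 0 + x 1 + x 2 - max (max (x 0) (x 1)) (x 2) - min (min (x 0) (x 1)) (x 2),
    min (min (x 0) (x 1)) (x 2)]

/-- A cylindrical growth diagram for `SL₃` of shape the `3 × k` rectangle `(k,k,k)`, on
the (periodically extended) staircase `{(i,j) : i ≤ j ≤ i + n}`.  Each entry `γ i j` is a
partition with at most three parts; the entries vanish on the diagonal, equal the full
rectangle at `j = i + n`, neighboring entries differ by vertical strips, the local growth
rule `γ_{i+1,j+1} = sort(γ_{i+1,j} + γ_{i,j+1} - γ_{i,j})` holds on every unit square,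
and the diagram is periodic: `γ_{i+n,j+n} = γ_{i,j}`. -/
structure CylGrowthDiagram (n k : ℕ) where
  γ : ℤ → ℤ → Fin 3 → ℤ
  nonneg : ∀ i j : ℤ, i ≤ j → j ≤ i + n → ∀ r, 0 ≤ γ i j r
  antitone : ∀ i j : ℤ, i ≤ j → j ≤ i + n → γ i j 1 ≤ γ i j 0 ∧ γ i j 2 ≤ γ i j 1
  diag : ∀ i : ℤ, γ i i = fun _ => 0
  rect : ∀ i : ℤ, γ i (i + n) = fun _ => (k : ℤ)
  vstrip_col : ∀ i j : ℤ, i + 1 ≤ j → j ≤ i + n →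
    ∀ r, γ (i + 1) j r ≤ γ i j r ∧ γ i j r ≤ γ (i + 1) j r + 1
  vstrip_row : ∀ i j : ℤ, i ≤ j → j + 1 ≤ i + n →
    ∀ r, γ i j r ≤ γ i (j + 1) r ∧ γ i (j + 1) r ≤ γ i j r + 1
  locRule : ∀ i j : ℤ, i + 1 ≤ j → j + 1 ≤ i + n →
    γ (i + 1) (j + 1) = sort3 (fun r => γ (i + 1) j r + γ i (j + 1) r - γ i j r)
  periodic : ∀ i j : ℤ, γ (i + n) (j + n) = γ i j

/-! The rows `1`, `2`, `3` of a U-turn are translates of each other: `γ_{2,j} = γ_{1,j} - (0,0,1)`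
and `γ_{3,j} = γ_{2,j} - (1,1,0)`, as one reads off at `j = 3`. Such a translation between
adjacent rows propagates to the next column through the local rule whenever the translated
vector is still weakly decreasing, because `sort3` then does nothing; here this holds since
`γ_{1,j}` is a partition. -/

theorem antitone_fin_three_iff {x : Fin 3 → ℤ} : Antitone x ↔ x 1 ≤ x 0 ∧ x 2 ≤ x 1 := by
  simp [Fin.antitone_iff_succ_le, Fin.forall_fin_two]

theorem sort3_of_antitone {x : Fin 3 → ℤ} (hx : Antitone x) : sort3 x = x := by
  rw [antitone_fin_three_iff] at hx
  funext r
  fin_cases r <;>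
    simp only [sort3, Fin.zero_eta, Fin.mk_one, Fin.reduceFinMk, Matrix.cons_val_zero,
      Matrix.cons_val_one, Matrix.cons_val] <;>
    omega

namespace CylGrowthDiagram

variable {n k : ℕ} (D : CylGrowthDiagram n k)

theorem γ_succ_succ_eq_sub {i j : ℤ} {d : Fin 3 → ℤ} (hij : i + 1 ≤ j) (hjn : j + 1 ≤ i + n)
    (hd : D.γ (i + 1) j = D.γ i j - d) (hsorted : Antitone (D.γ i (j + 1) - d)) :
    D.γ (i + 1) (j + 1) = D.γ i (j + 1) - d := by
  have hsum : (fun r => D.γ (i + 1) j r + D.γ i (j + 1) r - D.γ i j r) = D.γ i (j + 1) - d := by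
    funext r
    simp only [hd, Pi.sub_apply]
    ring
  rw [D.locRule i j hij hjn, hsum, sort3_of_antitone hsorted]

theorem γ_succ_eq_sub_of_antitone {i j₀ m : ℤ} {d : Fin 3 → ℤ} (hi : i + 1 ≤ j₀)
    (hm : m ≤ i + n) (h₀ : D.γ (i + 1) j₀ = D.γ i j₀ - d)
    (hsorted : ∀ j, j₀ < j → j ≤ m → Antitone (D.γ i j - d)) :
    ∀ j, j₀ ≤ j → j ≤ m → D.γ (i + 1) j = D.γ i j - d := by
  intro j hj
  induction j, hj using Int.leInduction with
  | base => exact fun _ => h₀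
  | succ j hj ih =>
    intro hjm
    exact D.γ_succ_succ_eq_sub (by omega) (by omega) (ih (by omega)) (hsorted _ (by omega) hjm)

end CylGrowthDiagram

theorem uturn_dif_general {n k : ℕ} (D : CylGrowthDiagram n k)
    (h23 : D.γ 2 3 = ![1, 1, 0])
    (h13 : D.γ 1 3 = ![1, 1, 1]) :
    ∀ j : ℤ, 3 ≤ j → j ≤ 1 + n →
      (∀ r, D.γ 1 j r = D.γ 3 j r + 1) ∧
      (D.γ 1 j 0 = D.γ 2 j 0 ∧ D.γ 1 j 1 = D.γ 2 j 1 ∧ D.γ 1 j 2 = D.γ 2 j 2 + 1) := by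
  have partition (j : ℤ) (h3j : 3 ≤ j) (hjn : j ≤ 1 + n) :
      D.γ 1 j 1 ≤ D.γ 1 j 0 ∧ D.γ 1 j 2 ≤ D.γ 1 j 1 :=
    D.antitone 1 j (by omega) hjn
  have row2 : ∀ j : ℤ, 3 ≤ j → j ≤ 1 + n → D.γ 2 j = D.γ 1 j - ![0, 0, 1] :=
    D.γ_succ_eq_sub_of_antitone (i := 1) (by norm_num) le_rfl
      (by rw [show (1 : ℤ) + 1 = 2 by rfl, h23, h13]; decide) fun j h3j hjn => by
        have h1j := partition j h3j.le hjn
        rw [antitone_fin_three_iff]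
        simp only [Pi.sub_apply, Matrix.cons_val_zero, Matrix.cons_val_one, Matrix.cons_val]
        omega
  have row3 : ∀ j : ℤ, 3 ≤ j → j ≤ 1 + n → D.γ 3 j = D.γ 2 j - ![1, 1, 0] :=
    D.γ_succ_eq_sub_of_antitone (i := 2) (by norm_num) (by omega)
      (by rw [show (2 : ℤ) + 1 = 3 by rfl, D.diag, h23]; decide) fun j h3j hjn => by
        have h1j := partition j h3j.le hjn
        rw [row2 j h3j.le hjn, antitone_fin_three_iff]
        simp only [Pi.sub_apply, Matrix.cons_val_zero, Matrix.cons_val_one, Matrix.cons_val]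
        omega
  intro j h3j hjn
  have e2 := congrFun (row2 j h3j hjn)
  have e3 := congrFun (row3 j h3j hjn)
  refine ⟨fun r => ?_, by simp [e2]⟩
  fin_cases r <;> simp [e3, e2]

/-- In a cylindrical growth diagram with a `U-turn`: `γ_{1,2} = ω₁`, `γ_{2,3} = ω₂`,
`γ_{1,3} = ω₃ = (1,1,1)`.  Then `γ_{1,j} = γ_{3,j} + (1,1,1)` as partitions for all
`3 ≤ j ≤ n+1`, and `dif(γ_{1,j}, γ_{2,j}) = {3}` (the third row, indexed `2` here)
for every such `j`. -/
theorem uturn_dif {n k : ℕ} (hn : 2 ≤ n) (D : CylGrowthDiagram n k)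
    (h12 : D.γ 1 2 = ![1, 0, 0]) (h23 : D.γ 2 3 = ![1, 1, 0])
    (h13 : D.γ 1 3 = ![1, 1, 1]) :
    ∀ j : ℤ, 3 ≤ j → j ≤ 1 + n →
      (∀ r, D.γ 1 j r = D.γ 3 j r + 1) ∧
      (D.γ 1 j 0 = D.γ 2 j 0 ∧ D.γ 1 j 1 = D.γ 2 j 1 ∧ D.γ 1 j 2 = D.γ 2 j 2 + 1) :=
  uturn_dif_general D h23 h13
end
end
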